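/- arXiv:2007.06005 — 5 statements merged into one kernel-verified Lean document; each statement's English description precedes it below -/
import Mathlib

section
/- Let Ξ be a relatively dense subset of ℝ^d containing 0, and suppose the subgroup L of ℝ^d generated by Ξ is a lattice (a discrete cocompact subgroup). Then there exists a positive integer M such that L equals the M-fold sumset Ξ + Ξ + ⋯ + Ξ (M times). -/
/-!
Let `L = ⟨Ξ⟩` and let `F` be the finitely many lattice points of norm at most `R`, so that
`L ⊆ Ξ + F`. For `y ∈ L`, repeatedly adding `y` and subtracting a nearby point of `Ξ` keeps the
remainder in `F`; a repeated remainder shows that some `k • y` with `k > 0` is a sum of elements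
of `Ξ`. Applied to `y = -ξ`, this makes the additive monoid generated by `Ξ` a group, hence equal
to `L`. Each of the finitely many points of `F` is then a sum of at most `M` elements of `Ξ`,
and `L ⊆ Ξ + F` gives `L = (M + 1) • Ξ`, padding with `0 ∈ Ξ`.
-/

open Pointwise

theorem Set.mem_nsmul_iff_exists_fin_sum {M : Type*} [AddCommMonoid M] {s : Set M} {n : ℕ}
    {x : M} : x ∈ n • s ↔ ∃ f : Fin n → M, (∀ i, f i ∈ s) ∧ ∑ i, f i = x := by
  rw [show n • s = ∑ _ : Fin n, s by simp, Set.mem_fintype_sum]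
  simp only [exists_prop]

theorem AddSubmonoid.exists_mem_nsmul_of_mem_closure {M : Type*} [AddMonoid M] {s : Set M}
    {x : M} (hx : x ∈ AddSubmonoid.closure s) : ∃ n : ℕ, x ∈ n • s := by
  induction hx using AddSubmonoid.closure_induction with
  | mem x hx => exact ⟨1, by rwa [one_nsmul]⟩
  | zero => exact ⟨0, by rw [zero_nsmul]; rfl⟩
  | add x y _ _ hx hy =>
    obtain ⟨m, hm⟩ := hx
    obtain ⟨n, hn⟩ := hy
    exact ⟨m + n, add_nsmul s m n ▸ Set.add_mem_add hm hn⟩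

section CoveredByFiniteTranslates

variable {G : Type*} [AddCommGroup G] {Ξ F : Set G}

theorem AddSubgroup.closure_subset_add_inter_closure
    (hcover : (AddSubgroup.closure Ξ : Set G) ⊆ Ξ + F) :
    (AddSubgroup.closure Ξ : Set G) ⊆ Ξ + (F ∩ AddSubgroup.closure Ξ) := by
  rintro _ hx
  obtain ⟨ξ, hξ, z, hz, rfl⟩ := hcover hx
  have hzL : z ∈ AddSubgroup.closure Ξ := by
    simpa using sub_mem hx (AddSubgroup.subset_closure hξ)
  exact Set.add_mem_add hξ ⟨hz, hzL⟩

theorem AddSubgroup.exists_pos_nsmul_mem_addSubmonoidClosure (hF : F.Finite)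
    (hcover : (AddSubgroup.closure Ξ : Set G) ⊆ Ξ + F) {y : G}
    (hy : y ∈ AddSubgroup.closure Ξ) :
    ∃ k : ℕ, 0 < k ∧ k • y ∈ AddSubmonoid.closure Ξ := by
  set L := AddSubgroup.closure Ξ
  have hstep : ∀ x ∈ L, ∃ z ∈ F ∩ L, x - z ∈ Ξ := by
    intro x hx
    obtain ⟨ξ, hξ, z, hz, rfl⟩ := closure_subset_add_inter_closure hcover hx
    exact ⟨z, hz, by simpa using hξ⟩
  choose! T hTF hTΞ using hstep
  -- `r` is the walk of remainders in `F`; between two equal remainders `(n - m) • y` telescopes.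
  set r : ℕ → G := fun n => (fun x => T (x + y))^[n] 0
  have hr_succ (n : ℕ) : r (n + 1) = T (r n + y) := Function.iterate_succ_apply' _ _ _
  have hrL (n : ℕ) : r n ∈ L := by
    induction n with
    | zero => exact zero_mem L
    | succ n ih => rw [hr_succ]; exact (hTF _ (add_mem ih hy)).2
  have htelescope (m k : ℕ) : r m + k • y - r (m + k) ∈ AddSubmonoid.closure Ξ := by
    induction k with
    | zero => simp
    | succ k ih =>
      have hsplit : r m + (k + 1) • y - r (m + (k + 1))
          = (r m + k • y - r (m + k)) + (r (m + k) + y - T (r (m + k) + y)) := by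
        rw [← add_assoc m k 1, hr_succ, succ_nsmul]; abel
      rw [hsplit]
      exact add_mem ih (AddSubmonoid.subset_closure (hTΞ _ (add_mem (hrL _) hy)))
  obtain ⟨m, n, hmn, hrep⟩ := Set.Finite.exists_lt_map_eq_of_forall_mem
    (f := fun n => r (n + 1)) (fun n => hr_succ n ▸ (hTF _ (add_mem (hrL n) hy)).1) hF
  refine ⟨n - m, Nat.sub_pos_of_lt hmn, ?_⟩
  simpa [show m + 1 + (n - m) = n + 1 by omega, ← hrep] using htelescope (m + 1) (n - m)

theorem AddSubgroup.closure_toAddSubmonoid_of_subset_add_finite (hF : F.Finite)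
    (hcover : (AddSubgroup.closure Ξ : Set G) ⊆ Ξ + F) :
    (AddSubgroup.closure Ξ).toAddSubmonoid = AddSubmonoid.closure Ξ := by
  refine le_antisymm ?_ (AddSubgroup.le_closure_toAddSubmonoid Ξ)
  rw [AddSubgroup.closure_toAddSubmonoid, AddSubmonoid.closure_le]
  rintro x (hx | hx)
  · exact AddSubmonoid.subset_closure hx
  · obtain ⟨k, hk, hkx⟩ := exists_pos_nsmul_mem_addSubmonoidClosure hF hcover
      (neg_mem_iff.mp (AddSubgroup.subset_closure hx))
    obtain ⟨j, rfl⟩ : ∃ j, k = j + 1 := ⟨k - 1, by omega⟩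
    have hx_eq : x = (j + 1) • x + j • -x := by rw [succ_nsmul, smul_neg]; abel
    rw [hx_eq]
    exact add_mem hkx (nsmul_mem (AddSubmonoid.subset_closure (Set.mem_neg.mp hx)) j)

theorem AddSubgroup.exists_closure_eq_nsmul_of_subset_add_finite (h0 : (0 : G) ∈ Ξ)
    (hF : F.Finite) (hcover : (AddSubgroup.closure Ξ : Set G) ⊆ Ξ + F) :
    ∃ M : ℕ, 0 < M ∧ (AddSubgroup.closure Ξ : Set G) = M • Ξ := by
  set L := AddSubgroup.closure Ξ
  have hrep : ∀ z ∈ F ∩ L, ∃ n : ℕ, z ∈ n • Ξ := fun z hz =>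
    AddSubmonoid.exists_mem_nsmul_of_mem_closure <| by
      rw [← closure_toAddSubmonoid_of_subset_add_finite hF hcover]; exact hz.2
  choose! n hn using hrep
  obtain ⟨M, hM⟩ := ((hF.inter_of_left L).image n).bddAbove
  have hFM : F ∩ L ⊆ M • Ξ := fun z hz =>
    Set.nsmul_subset_nsmul_right h0 (hM ⟨z, hz, rfl⟩) (hn z hz)
  refine ⟨M + 1, M.succ_pos, subset_antisymm ?_ ?_⟩
  · calc (L : Set G) ⊆ Ξ + (F ∩ L) := closure_subset_add_inter_closure hcover
      _ ⊆ Ξ + M • Ξ := Set.add_subset_add_left hFM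
      _ = (M + 1) • Ξ := (succ_nsmul' Ξ M).symm
  · intro x hx
    obtain ⟨f, hf, rfl⟩ := Set.mem_nsmul_iff_exists_fin_sum.mp hx
    exact sum_mem fun i _ => subset_closure (hf i)

end CoveredByFiniteTranslates

theorem Submodule.coe_span_int_range {ι E : Type*} [Fintype ι] [AddCommGroup E] (v : ι → E) :
    (Submodule.span ℤ (Set.range v) : Set E) = Set.range (fun c : ι → ℤ => ∑ i, c i • v i) := by
  ext x
  exact Submodule.mem_span_range_iff_exists_fun ℤ

theorem stmt0_general (d : ℕ) (Ξ : Set (EuclideanSpace ℝ (Fin d)))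
    (h0 : (0 : EuclideanSpace ℝ (Fin d)) ∈ Ξ)
    (hrd : ∃ R > (0:ℝ), ∀ x : EuclideanSpace ℝ (Fin d), ∃ ξ ∈ Ξ, ‖x - ξ‖ ≤ R)
    (L : AddSubgroup (EuclideanSpace ℝ (Fin d)))
    (hL : L = AddSubgroup.closure Ξ)
    (b : Module.Basis (Fin d) ℝ (EuclideanSpace ℝ (Fin d)))
    (hlat : (L : Set (EuclideanSpace ℝ (Fin d))) =
      Set.range (fun c : Fin d → ℤ => ∑ i, c i • b i)) :
    ∃ M : ℕ, 0 < M ∧ (L : Set (EuclideanSpace ℝ (Fin d))) =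
      {x | ∃ f : Fin M → EuclideanSpace ℝ (Fin d), (∀ i, f i ∈ Ξ) ∧ ∑ i, f i = x} := by
  subst hL
  obtain ⟨R, -, hR⟩ := hrd
  rw [← Submodule.coe_span_int_range] at hlat
  set L := AddSubgroup.closure Ξ
  have hF : (Metric.closedBall 0 R ∩ (L : Set (EuclideanSpace ℝ (Fin d)))).Finite :=
    hlat ▸ ZSpan.setFinite_inter b Metric.isBounded_closedBall
  have hcover : (L : Set (EuclideanSpace ℝ (Fin d))) ⊆ Ξ + Metric.closedBall 0 R ∩ L := by
    intro x hx
    obtain ⟨ξ, hξ, hxξ⟩ := hR x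
    exact ⟨ξ, hξ, x - ξ, ⟨mem_closedBall_zero_iff.mpr hxξ,
      sub_mem hx (AddSubgroup.subset_closure hξ)⟩, add_sub_cancel ξ x⟩
  obtain ⟨M, hM, hLM⟩ := AddSubgroup.exists_closure_eq_nsmul_of_subset_add_finite h0 hF hcover
  refine ⟨M, hM, ?_⟩
  rw [hLM]
  ext x
  exact Set.mem_nsmul_iff_exists_fin_sum

/-- If Ξ is relatively dense in ℝ^d, contains 0, and the subgroup L it
generates is a lattice (ℤ-span of a basis of ℝ^d), then L is an M-fold sumset of Ξ
for some positive integer M. -/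
theorem stmt0 (d : ℕ) (hd : 0 < d) (Ξ : Set (EuclideanSpace ℝ (Fin d)))
    (h0 : (0 : EuclideanSpace ℝ (Fin d)) ∈ Ξ)
    (hrd : ∃ R > (0:ℝ), ∀ x : EuclideanSpace ℝ (Fin d), ∃ ξ ∈ Ξ, ‖x - ξ‖ ≤ R)
    (L : AddSubgroup (EuclideanSpace ℝ (Fin d)))
    (hL : L = AddSubgroup.closure Ξ)
    (b : Module.Basis (Fin d) ℝ (EuclideanSpace ℝ (Fin d)))
    (hlat : (L : Set (EuclideanSpace ℝ (Fin d))) =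
      Set.range (fun c : Fin d → ℤ => ∑ i, c i • b i)) :
    ∃ M : ℕ, 0 < M ∧ (L : Set (EuclideanSpace ℝ (Fin d))) =
      {x | ∃ f : Fin M → EuclideanSpace ℝ (Fin d), (∀ i, f i ∈ Ξ) ∧ ∑ i, f i = x} :=
  stmt0_general d Ξ h0 hrd L hL b hlat
end

section
/- Let D ⊆ ℝ^d be a set such that ((D − D) − (D − D)) ∩ U = {0} for some neighborhood U of 0 (a Meyer-type condition on the difference set of return vectors). Let n ≥ 1, x ∈ ℝ^d, ε > 0 with B(0, 4ε) ⊆ U, and suppose c₀, c₁, …, c_n ∈ B(0, ε) are vectors such that kx + c_k ∈ D for all k = 0, 1, …, n. If moreover all the consecutive differences (k+1)x + c_{k+1} − (kx + c_k) lie in D − D, then all these consecutive differences are equal: there exists z ∈ ℝ^d such that (k+1)x + c_{k+1} − (kx + c_k) = z for every k = 0, …, n−1. -/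
/-!
The `k`-th step of the progression is `x + (c (k+1) - c k)`, so any two steps differ by
`(c (k+1) - c k) - (c 1 - c 0)`, of norm at most `4ε`. Both steps lie in `D - D`, and the
Meyer condition leaves `0` as the only such small difference.
-/

open Pointwise Metric

section
variable {E : Type*} [SeminormedAddCommGroup E]

theorem eq_of_norm_sub_le_of_sub_inter_eq_zero {S U : Set E} (hS : (S - S) ∩ U = {0}) {r : ℝ}
    (hr : closedBall 0 r ⊆ U) {a b : E} (ha : a ∈ S) (hb : b ∈ S) (hab : ‖a - b‖ ≤ r) :
    a = b := by
  have hmem : a - b ∈ (S - S) ∩ U :=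
    ⟨Set.sub_mem_sub ha hb, hr (mem_closedBall_zero_iff.2 hab)⟩
  rw [hS] at hmem
  exact sub_eq_zero.1 hmem

theorem succ_nsmul_add_sub_nsmul_add (k : ℕ) (x a b : E) :
    ((k + 1) • x + b) - (k • x + a) = x + (b - a) := by
  rw [succ_nsmul]
  abel

theorem norm_sub_sub_sub_le_four_mul {a b c d : E} {ε : ℝ} (ha : ‖a‖ ≤ ε) (hb : ‖b‖ ≤ ε)
    (hc : ‖c‖ ≤ ε) (hd : ‖d‖ ≤ ε) : ‖(a - b) - (c - d)‖ ≤ 4 * ε :=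
  calc ‖(a - b) - (c - d)‖ ≤ ‖a - b‖ + ‖c - d‖ := norm_sub_le _ _
    _ ≤ (‖a‖ + ‖b‖) + (‖c‖ + ‖d‖) := add_le_add (norm_sub_le _ _) (norm_sub_le _ _)
    _ ≤ 4 * ε := by linarith

end

theorem stmt2_general (d : ℕ) (D U : Set (EuclideanSpace ℝ (Fin d)))
    (hMeyer : ((D - D) - (D - D)) ∩ U = {0})
    (n : ℕ) (x : EuclideanSpace ℝ (Fin d)) (ε : ℝ)
    (hball : Metric.closedBall (0 : EuclideanSpace ℝ (Fin d)) (4 * ε) ⊆ U)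
    (c : ℕ → EuclideanSpace ℝ (Fin d))
    (hc : ∀ k ≤ n, c k ∈ Metric.closedBall (0 : EuclideanSpace ℝ (Fin d)) ε)
    (hdiff : ∀ k < n, ((k + 1) • x + c (k + 1)) - (k • x + c k) ∈ D - D) :
    ∃ z : EuclideanSpace ℝ (Fin d),
      ∀ k < n, ((k + 1) • x + c (k + 1)) - (k • x + c k) = z := by
  refine ⟨((0 + 1) • x + c (0 + 1)) - (0 • x + c 0), fun k hk => ?_⟩
  have hc' : ∀ j ≤ n, ‖c j‖ ≤ ε := fun j hj => mem_closedBall_zero_iff.1 (hc j hj)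
  refine eq_of_norm_sub_le_of_sub_inter_eq_zero hMeyer hball (hdiff k hk) (hdiff 0 (by omega)) ?_
  rw [succ_nsmul_add_sub_nsmul_add, succ_nsmul_add_sub_nsmul_add, add_sub_add_left_eq_sub]
  exact norm_sub_sub_sub_le_four_mul (hc' _ hk) (hc' _ hk.le) (hc' _ (by omega)) (hc' _ (by omega))

/-- In a Meyer-type set, an almost arithmetic progression with small
errors c_k is an exact arithmetic progression: all consecutive differences agree. -/
theorem stmt2 (d : ℕ) (D U : Set (EuclideanSpace ℝ (Fin d)))
    (hU : U ∈ nhds (0 : EuclideanSpace ℝ (Fin d)))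
    (hMeyer : ((D - D) - (D - D)) ∩ U = {0})
    (n : ℕ) (hn : 1 ≤ n) (x : EuclideanSpace ℝ (Fin d)) (ε : ℝ) (hε : 0 < ε)
    (hball : Metric.closedBall (0 : EuclideanSpace ℝ (Fin d)) (4 * ε) ⊆ U)
    (c : ℕ → EuclideanSpace ℝ (Fin d))
    (hc : ∀ k ≤ n, c k ∈ Metric.closedBall (0 : EuclideanSpace ℝ (Fin d)) ε)
    (hD : ∀ k ≤ n, k • x + c k ∈ D)
    (hdiff : ∀ k < n, ((k + 1) • x + c (k + 1)) - (k • x + c k) ∈ D - D) :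
    ∃ z : EuclideanSpace ℝ (Fin d),
      ∀ k < n, ((k + 1) • x + c (k + 1)) - (k • x + c k) = z :=
  stmt2_general d D U hMeyer n x ε hball c hc hdiff
end

section
/- Let Ξ ⊆ ℝ^d with 0 ∈ Ξ, let Q : ℝ^d → ℝ^d be linear and bijective, and let N be a positive integer such that Q^{2N}(Ξ + Ξ) ⊆ Q^N(Ξ). Then for every positive integer k, Q^{kN}(Ξ + Ξ + ⋯ + Ξ) ⊆ Q^N(Ξ), where the sumset has k summands. -/
open Pointwise

namespace Module.End

variable {R M : Type*} [Semiring R] [AddCommMonoid M] [Module R M] {T : Module.End R M} {S : Set M}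

/-- As `0 ∈ S` gives `S ⊆ k • S`, the inductive hypothesis also controls `T ^ k '' S`, so
`T ^ (k + 1)` maps `k • S + S` into `T '' (T '' S + T '' S) = T ^ 2 '' (S + S)`. -/
theorem image_pow_nsmul_subset_of_image_sq_add_subset (h0 : 0 ∈ S)
    (h : ⇑(T ^ 2) '' (S + S) ⊆ T '' S) {k : ℕ} (hk : 1 ≤ k) :
    ⇑(T ^ k) '' (k • S) ⊆ T '' S := by
  induction k, hk using Nat.le_induction with
  | base => simp
  | succ k hk ih =>
    have hS : ⇑(T ^ k) '' S ⊆ T '' S :=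
      (Set.image_mono (Set.subset_nsmul h0 (by omega))).trans ih
    calc ⇑(T ^ (k + 1)) '' ((k + 1) • S)
        = T '' (⇑(T ^ k) '' (k • S) + ⇑(T ^ k) '' S) := by
          rw [succ_nsmul, pow_succ', Module.End.coe_mul, Set.image_comp, Set.image_add]
      _ ⊆ T '' (T '' S + T '' S) := by gcongr
      _ = ⇑(T ^ 2) '' (S + S) := by
          simp only [sq, Module.End.coe_mul, Set.image_comp, Set.image_add]
      _ ⊆ T '' S := h

end Module.End

theorem stmt8_general (d : ℕ) (Ξ : Set (EuclideanSpace ℝ (Fin d)))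
    (h0 : (0 : EuclideanSpace ℝ (Fin d)) ∈ Ξ)
    (Q : EuclideanSpace ℝ (Fin d) →ₗ[ℝ] EuclideanSpace ℝ (Fin d))
    (N : ℕ)
    (hhyp : ⇑(Q ^ (2 * N)) '' (Ξ + Ξ) ⊆ ⇑(Q ^ N) '' Ξ) :
    ∀ k : ℕ, 0 < k →
      ⇑(Q ^ (k * N)) ''
          {x | ∃ f : Fin k → EuclideanSpace ℝ (Fin d), (∀ i, f i ∈ Ξ) ∧ ∑ i, f i = x}
        ⊆ ⇑(Q ^ N) '' Ξ := by
  intro k hk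
  have hsumset : {x | ∃ f : Fin k → EuclideanSpace ℝ (Fin d), (∀ i, f i ∈ Ξ) ∧ ∑ i, f i = x}
      = k • Ξ :=
    Set.ext fun _ => Set.mem_nsmul_iff_sum.symm
  rw [pow_mul'] at hhyp
  rw [pow_mul', hsumset]
  exact Module.End.image_pow_nsmul_subset_of_image_sq_add_subset h0 hhyp hk

/-- If 0 ∈ Ξ, Q is linear bijective and Q^{2N}(Ξ+Ξ) ⊆ Q^N(Ξ), then
for every k ≥ 1, Q^{kN} applied to the k-fold sumset of Ξ lands in Q^N(Ξ). -/
theorem stmt8 (d : ℕ) (Ξ : Set (EuclideanSpace ℝ (Fin d)))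
    (h0 : (0 : EuclideanSpace ℝ (Fin d)) ∈ Ξ)
    (Q : EuclideanSpace ℝ (Fin d) →ₗ[ℝ] EuclideanSpace ℝ (Fin d))
    (hQ : Function.Bijective Q) (N : ℕ) (hN : 0 < N)
    (hhyp : ⇑(Q ^ (2 * N)) '' (Ξ + Ξ) ⊆ ⇑(Q ^ N) '' Ξ) :
    ∀ k : ℕ, 0 < k →
      ⇑(Q ^ (k * N)) ''
          {x | ∃ f : Fin k → EuclideanSpace ℝ (Fin d), (∀ i, f i ∈ Ξ) ∧ ∑ i, f i = x}
        ⊆ ⇑(Q ^ N) '' Ξ :=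
  stmt8_general d Ξ h0 Q N hhyp
end

section
/- Let Ξ ⊆ ℝ^d with 0 ∈ Ξ, Q : ℝ^d → ℝ^d linear bijective, L ⊆ ℝ^d a subgroup, Λ ⊆ ℝ^d, and η ∈ Λ. Assume: (i) Q^N(Ξ) ⊆ Λ − η for some N > 0, (ii') Q^{2N}(Ξ+Ξ) ⊆ Q^N(Ξ), and (iii) there exist positive integers k, K with Q^K(L) ⊆ Ξ + Ξ + ⋯ + Ξ (k summands). Then Q^{kN + K}(L) ⊆ Λ − η. -/
open Pointwise

/-- Algebraic coincidence Q^N(Ξ) ⊆ Λ − η together with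
Q^{2N}(Ξ+Ξ) ⊆ Q^N(Ξ) and Q^K(L) ⊆ Ξ + ⋯ + Ξ (k summands) gives
Q^{kN+K}(L) ⊆ Λ − η. -/
theorem stmt9 (d : ℕ) (Ξ : Set (EuclideanSpace ℝ (Fin d)))
    (h0 : (0 : EuclideanSpace ℝ (Fin d)) ∈ Ξ)
    (Q : EuclideanSpace ℝ (Fin d) →ₗ[ℝ] EuclideanSpace ℝ (Fin d))
    (hQ : Function.Bijective Q)
    (L : AddSubgroup (EuclideanSpace ℝ (Fin d)))
    (Λ : Set (EuclideanSpace ℝ (Fin d))) (η : EuclideanSpace ℝ (Fin d)) (hη : η ∈ Λ)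
    (N k K : ℕ) (hN : 0 < N) (hk : 0 < k) (hK : 0 < K)
    (ha : ∀ x ∈ Ξ, (Q ^ N) x + η ∈ Λ)
    (hb : ⇑(Q ^ (2 * N)) '' (Ξ + Ξ) ⊆ ⇑(Q ^ N) '' Ξ)
    (hc : ∀ x ∈ L, ∃ f : Fin k → EuclideanSpace ℝ (Fin d),
      (∀ i, f i ∈ Ξ) ∧ (Q ^ K) x = ∑ i, f i) :
    ∀ x ∈ L, (Q ^ (k * N + K)) x + η ∈ Λ := by
  have hQNinj : Function.Injective ⇑(Q ^ N) := by
    rw [Module.End.coe_pow]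
    exact Function.Injective.iterate hQ.injective N
  -- Q^N (a + b) ∈ Ξ for a b ∈ Ξ
  have hb' : ∀ a ∈ Ξ, ∀ b ∈ Ξ, (Q ^ N) (a + b) ∈ Ξ := by
    intro a ha' b hb''
    have hmem : (Q ^ (2 * N)) (a + b) ∈ ⇑(Q ^ N) '' Ξ :=
      hb ⟨a + b, Set.add_mem_add ha' hb'', rfl⟩
    obtain ⟨c, hc', hc2⟩ := hmem
    have : (Q ^ N) ((Q ^ N) (a + b)) = (Q ^ N) c := by
      rw [hc2, two_mul, pow_add, Module.End.mul_apply]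
    rwa [hQNinj this]
  have hΞ : ∀ a ∈ Ξ, (Q ^ N) a ∈ Ξ := fun a ha' => by
    simpa using hb' a ha' 0 h0
  have hΞm : ∀ (m : ℕ), ∀ a ∈ Ξ, (Q ^ (m * N)) a ∈ Ξ := by
    intro m
    induction m with
    | zero => simpa using fun a ha' => ha'
    | succ n ih =>
      intro a ha'
      have : (Q ^ ((n + 1) * N)) a = (Q ^ N) ((Q ^ (n * N)) a) := by
        rw [add_mul, one_mul, add_comm, pow_add, Module.End.mul_apply]
      rw [this]
      exact hΞ _ (ih a ha')
  -- key claim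
  have key : ∀ (m : ℕ) (f : Fin (m + 1) → EuclideanSpace ℝ (Fin d)),
      (∀ i, f i ∈ Ξ) → (Q ^ (m * N)) (∑ i, f i) ∈ Ξ := by
    intro m
    induction m with
    | zero => intro f hf; simpa using hf 0
    | succ n ih =>
      intro f hf
      rw [Fin.sum_univ_castSucc]
      have h1 : (Q ^ (n * N)) (∑ i : Fin (n + 1), f i.castSucc) ∈ Ξ :=
        ih (fun i => f i.castSucc) (fun i => hf _)
      have h2 : (Q ^ (n * N)) (f (Fin.last (n + 1))) ∈ Ξ := hΞm n _ (hf _)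
      have : (Q ^ ((n + 1) * N)) (∑ i : Fin (n + 1), f i.castSucc + f (Fin.last (n + 1)))
          = (Q ^ N) ((Q ^ (n * N)) (∑ i : Fin (n + 1), f i.castSucc)
            + (Q ^ (n * N)) (f (Fin.last (n + 1)))) := by
        rw [add_mul, one_mul, add_comm (n * N), pow_add, Module.End.mul_apply, map_add]
      rw [this]
      exact hb' _ h1 _ h2
  intro x hx
  obtain ⟨f, hf, hsum⟩ := hc x hx
  obtain ⟨k', rfl⟩ : ∃ k', k = k' + 1 := ⟨k - 1, (Nat.succ_pred_eq_of_pos hk).symm⟩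
  have hkey : (Q ^ (k' * N)) ((Q ^ K) x) ∈ Ξ := by rw [hsum]; exact key k' f hf
  have : (Q ^ ((k' + 1) * N + K)) x = (Q ^ N) ((Q ^ (k' * N)) ((Q ^ K) x)) := by
    rw [add_mul, one_mul]
    rw [show k' * N + N + K = N + (k' * N + K) by ring, pow_add, pow_add,
      Module.End.mul_apply, Module.End.mul_apply]
  rw [this]
  exact ha _ hkey
end

section
/- Let X be a compact metric space and let ℝ^d act continuously on X by translation (S, x) ↦ S + x, with the action of ℝ^d on X minimal. Let B = {b₁, …, b_d} be a basis of ℝ^d and let A ⊆ X be a closed set invariant under translation by every element of the lattice Γ = ℤb₁ + ⋯ + ℤb_d (i.e. A + γ = A for γ ∈ Γ). If A is nonempty, then for every R ∈ X there exists a sequence (y_j) in ℝ^d, convergent modulo Γ, and a point S ∈ A such that S + y_j → R; consequently every R ∈ X lies in A + y for some y ∈ ℝ^d. -/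
/-!
Split `x ∈ ℝ^d` along the basis `B` into its integer part `⌊x⌋ ∈ Γ` and its fractional part
`{x}`, which lies in the compact parallelepiped `P` spanned by `B`. For `S ∈ A` the orbit point
`S + x = (S + ⌊x⌋) + {x}` then lies in the compact, hence closed, set `A + P`; since that orbit is
dense, `A + P = X`.
-/

open Set

section

variable {X E ι : Type*} [NormedAddCommGroup E] [NormedSpace ℝ E] [Fintype ι]
  {act : X → E → X}

theorem ZSpan.coe_floor_eq_sum (b : Module.Basis ι ℝ E) (x : E) :
    (ZSpan.floor b x : E) = ∑ i, ⌊b.repr x i⌋ • b i := by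
  simp [ZSpan.floor]

theorem range_act_subset_image_prod_parallelepiped
    (hadd : ∀ S x y, act (act S x) y = act S (x + y)) (b : Module.Basis ι ℝ E) {A : Set X}
    (hinv : ∀ S ∈ A, ∀ γ : ι → ℤ, act S (∑ i, γ i • b i) ∈ A) {S : X} (hS : S ∈ A) :
    range (act S) ⊆ (fun p : X × E => act p.1 p.2) '' (A ×ˢ parallelepiped b) := by
  rintro _ ⟨x, rfl⟩
  refine ⟨(act S (ZSpan.floor b x), ZSpan.fract b x), ⟨?_, ?_⟩, ?_⟩
  · rw [ZSpan.coe_floor_eq_sum]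
    exact hinv S hS _
  · exact ZSpan.fundamentalDomain_subset_parallelepiped b (ZSpan.fract_mem_fundamentalDomain b x)
  · simp [hadd, ZSpan.fract_apply]

theorem image_prod_parallelepiped_eq_univ [TopologicalSpace X] [CompactSpace X] [T2Space X]
    (hcont : Continuous fun p : X × E => act p.1 p.2)
    (hadd : ∀ S x y, act (act S x) y = act S (x + y)) (b : Module.Basis ι ℝ E) {A : Set X}
    (hclosed : IsClosed A) (hinv : ∀ S ∈ A, ∀ γ : ι → ℤ, act S (∑ i, γ i • b i) ∈ A)
    {S : X} (hS : S ∈ A) (hdense : Dense (range (act S))) :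
    (fun p : X × E => act p.1 p.2) '' (A ×ˢ parallelepiped b) = univ := by
  have hK : IsClosed ((fun p : X × E => act p.1 p.2) '' (A ×ˢ parallelepiped b)) :=
    ((hclosed.isCompact.prod b.parallelepiped.isCompact).image hcont).isClosed
  rw [← hK.closure_eq]
  exact (hdense.mono (range_act_subset_image_prod_parallelepiped hadd b hinv hS)).closure_eq

end

theorem stmt16_general (d : ℕ) (X : Type*) [MetricSpace X] [CompactSpace X]
    (act : X → EuclideanSpace ℝ (Fin d) → X)
    (hcont : Continuous fun p : X × EuclideanSpace ℝ (Fin d) => act p.1 p.2)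
    (hadd : ∀ S x y, act (act S x) y = act S (x + y))
    (hmin : ∀ S : X, Dense (Set.range (act S)))
    (b : Module.Basis (Fin d) ℝ (EuclideanSpace ℝ (Fin d)))
    (A : Set X) (hclosed : IsClosed A) (hne : A.Nonempty)
    (hinv : ∀ S ∈ A, ∀ γ : Fin d → ℤ, act S (∑ i, γ i • b i) ∈ A) :
    ∀ R : X,
      (∃ S ∈ A, ∃ y : ℕ → EuclideanSpace ℝ (Fin d),
        (∃ γ : ℕ → (Fin d → ℤ), ∃ z : EuclideanSpace ℝ (Fin d),
          Filter.Tendsto (fun j => y j - ∑ i, γ j i • b i) Filter.atTop (nhds z)) ∧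
        Filter.Tendsto (fun j => act S (y j)) Filter.atTop (nhds R)) ∧
      (∃ S' ∈ A, ∃ y₀ : EuclideanSpace ℝ (Fin d), act S' y₀ = R) := by
  intro R
  obtain ⟨S, hS⟩ := hne
  obtain ⟨⟨S', y₀⟩, ⟨hS', -⟩, hR⟩ :
      R ∈ (fun p : X × EuclideanSpace ℝ (Fin d) => act p.1 p.2) '' (A ×ˢ parallelepiped b) := by
    rw [image_prod_parallelepiped_eq_univ hcont hadd b hclosed hinv hS (hmin S)]
    trivial
  exact ⟨⟨S', hS', fun _ => y₀, ⟨0, y₀, by simp⟩, by simp [hR]⟩, S', hS', y₀, hR⟩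

/-- In a minimal continuous ℝ^d-action on a compact metric space,
a nonempty closed set A invariant under a full-rank lattice Γ reaches every point:
every R is a limit of translates (along a sequence convergent mod Γ) of a point of A,
and consequently lies in some translate of A. -/
theorem stmt16 (d : ℕ) (X : Type*) [MetricSpace X] [CompactSpace X]
    (act : X → EuclideanSpace ℝ (Fin d) → X)
    (hcont : Continuous fun p : X × EuclideanSpace ℝ (Fin d) => act p.1 p.2)
    (hzero : ∀ S, act S 0 = S)
    (hadd : ∀ S x y, act (act S x) y = act S (x + y))
    (hmin : ∀ S : X, Dense (Set.range (act S)))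
    (b : Module.Basis (Fin d) ℝ (EuclideanSpace ℝ (Fin d)))
    (A : Set X) (hclosed : IsClosed A) (hne : A.Nonempty)
    (hinv : ∀ S ∈ A, ∀ γ : Fin d → ℤ, act S (∑ i, γ i • b i) ∈ A) :
    ∀ R : X,
      (∃ S ∈ A, ∃ y : ℕ → EuclideanSpace ℝ (Fin d),
        (∃ γ : ℕ → (Fin d → ℤ), ∃ z : EuclideanSpace ℝ (Fin d),
          Filter.Tendsto (fun j => y j - ∑ i, γ j i • b i) Filter.atTop (nhds z)) ∧
        Filter.Tendsto (fun j => act S (y j)) Filter.atTop (nhds R)) ∧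
      (∃ S' ∈ A, ∃ y₀ : EuclideanSpace ℝ (Fin d), act S' y₀ = R) :=
  stmt16_general d X act hcont hadd hmin b A hclosed hne hinv
end
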